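/- Executing the scaffold solution of the constructed parallel token swapping instance from the initial token placement brings each item token to a vertex that is the target vertex of some item token; equivalently, after the K rounds of the scaffold solution, the set of vertices occupied by the item tokens is exactly {r} ∪ {s^{a(i,n)}_1 : 1 ≤ i ≤ m}. -/

import Mathlib

namespace ParallelTS

/-!
Construction (parallel): given a Star STS instance with slots `1,…,m` (encoded as
`Fin m`), items `0,…,m` (encoded as `Option (Fin m)`, `none` = item 0), target
permutation `π` and swap sequence `s₁,…,sₙ` (`s : Fin n → Fin m`), set `K = 8n` and
build a subdivided star with root `r` and branches: swap branches `w¹,…,wⁿ`, slot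
branches `s¹,…,s^{m+n}` and garbage branches `g`, `g′`, each a path of `K` vertices.
-/

/-- The branches: swap branches `wᵗ` (`Sum.inl`), slot branches `sⁱ`
(`Sum.inr (Sum.inl _)`), and the garbage branches `g = Sum.inr (Sum.inr false)` and
`g′ = Sum.inr (Sum.inr true)`. -/
abbrev Branch (m n : ℕ) := Fin n ⊕ Fin (m + n) ⊕ Bool

/-- Vertices of the subdivided star: `none` is the root `r`; `some (b, j)` is the
vertex `b_{j+1}` of branch `b` at distance `j+1` from the root.  (The coordinate `j`
ranges over all of `ℕ`; the graph below only has edges between the root and the first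
`K` vertices of each branch, so the remaining vertices are isolated and carry no
tokens.) -/
abbrev PV (m n : ℕ) := Option (Branch m n × ℕ)

/-- Adjacency generator for the subdivided star with branches of length `K = 8n`. -/
def prel {m n : ℕ} : PV m n → PV m n → Prop
  | none, some (_, j) => j = 0 ∧ 0 < 8 * n
  | some (b, j), some (b', j') => b = b' ∧ j' = j + 1 ∧ j' < 8 * n
  | _, _ => False

/-- The subdivided star, as a simple graph. -/
def PGraph (m n : ℕ) : SimpleGraph (PV m n) := SimpleGraph.fromRel prel

/-- Swap the two values `e.1`, `e.2`. -/
def swapV {V : Type*} [DecidableEq V] (e : V × V) (v : V) : V :=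
  if v = e.1 then e.2 else if v = e.2 then e.1 else v

/-- Trajectory of the vertex `v` under a schedule of rounds, each round being a list
of (disjoint) swaps. -/
def applySched {V : Type*} [DecidableEq V] (sched : List (List (V × V))) (v : V) : V :=
  sched.foldl (fun v R => R.foldl (fun v e => swapV e v) v) v

/-- Two swaps do not share a vertex. -/
def NoShare {V : Type*} (e f : V × V) : Prop :=
  e.1 ≠ f.1 ∧ e.1 ≠ f.2 ∧ e.2 ≠ f.1 ∧ e.2 ≠ f.2

/-- Apply a sequence of star swaps (each given by a leaf) to a placement on the star
with center `none` and leaves `some l`. -/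
def starApply {L : Type*} [DecidableEq L] (σ : List L) (f : Option L → Option L) :
    Option L → Option L :=
  σ.foldl (fun g l => fun t => swapV ((none : Option L), some l) (g t)) f

/-- The Star STS instance is a YES instance. -/
def StarSTSYes {L : Type*} [DecidableEq L] (π : Equiv.Perm (Option L)) (σ : List L) : Prop :=
  ∃ σ' : List L, σ'.Sublist σ ∧ starApply σ' id = ⇑π

variable {m n : ℕ}

/-- `a(i,t)`: the index of the slot branch representing slot `i` after `t` steps:
`a(i,0) = i`, and `a(i,t) = a(i,t-1)` for `i ≠ s_t` while `a(s_t,t) = m + t`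
(`1`-indexed; below everything is `0`-indexed). -/
def aFun (s : Fin n → Fin m) : ℕ → Fin m → Fin (m + n)
  | 0, i => ⟨i.val, Nat.lt_of_lt_of_le i.isLt (Nat.le_add_right m n)⟩
  | t + 1, i =>
      if h : t < n then
        (if s ⟨t, h⟩ = i then ⟨m + t, Nat.add_lt_add_left h m⟩ else aFun s t i)
      else aFun s t i

/-- The enforcement tokens are indexed by `(t, r) : Fin n × Fin 4`; the token
`e_{(t,r)}` is `e_d` for the odd number `d = 8t + 2r + 1`. -/
def dOf (t : Fin n) (r : Fin 4) : ℕ := 8 * t.val + 2 * r.val + 1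

/-- The starting branch `x^d` of enforcement token `e_d`, `d = 8t+2r+1`:
`x^{8T-7} = x^{8T-5} = w^T`, `x^{8T-3} = g′`, `x^{8T-1} = s^{m+T}` (where
`T = t+1`). -/
def xB (s : Fin n → Fin m) (t : Fin n) (r : Fin 4) : Branch m n :=
  if r.val ≤ 1 then Sum.inl t
  else if r.val = 2 then Sum.inr (Sum.inr true)
  else Sum.inr (Sum.inl ⟨m + t.val, Nat.add_lt_add_left t.isLt m⟩)

/-- The destination branch `y^d` of enforcement token `e_d`, `d = 8t+2r+1`:
`y^{8T-7} = s^{a(s_T, T-1)}`, `y^{8T-5} = g`, `y^{8T-3} = y^{8T-1} = w^T` (where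
`T = t+1`). -/
def yB (s : Fin n → Fin m) (t : Fin n) (r : Fin 4) : Branch m n :=
  if r.val = 0 then Sum.inr (Sum.inl (aFun s t.val (s t)))
  else if r.val = 1 then Sum.inr (Sum.inr false)
  else Sum.inl t

/-- Initial vertex of item token `o`: the root for item `0`, the vertex `sⁱ₁` for
item `i`. -/
def itemInit (s : Fin n → Fin m) : Option (Fin m) → PV m n
  | none => none
  | some i => some (Sum.inr (Sum.inl (aFun s 0 i)), 0)

/-- Initial vertex of the enforcement token `e_d`, namely `x^d_d`. -/
def enfInit (s : Fin n → Fin m) (t : Fin n) (r : Fin 4) : PV m n :=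
  some (xB s t r, dOf t r - 1)

/-- A vertex initially occupied by an item or enforcement token. -/
def Occupied (s : Fin n → Fin m) (v : PV m n) : Prop :=
  (∃ o : Option (Fin m), itemInit s o = v) ∨
    (∃ tr : Fin n × Fin 4, enfInit s tr.1 tr.2 = v)

/-- The tokens of the parallel instance: item tokens, enforcement tokens, and one
filler token for each initially unoccupied vertex. -/
abbrev PTok (s : Fin n → Fin m) :=
  Option (Fin m) ⊕ (Fin n × Fin 4) ⊕ {v : PV m n // ¬ Occupied s v}

/-- Initial placement of all tokens. -/
def initP (s : Fin n → Fin m) : PTok s → PV m n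
  | Sum.inl o => itemInit s o
  | Sum.inr (Sum.inl (t, r)) => enfInit s t r
  | Sum.inr (Sum.inr v) => v.val

/-- Position of the enforcement token with branches `xb`, `yb` and starting distance
`d` after `τ` rounds of the scaffold solution: it moves one step toward its target in
every round, reaching the root after round `d`. -/
def posE (xb yb : Branch m n) (d τ : ℕ) : PV m n :=
  if τ < d then some (xb, d - τ - 1)
  else if τ = d then none
  else some (yb, τ - d - 1)

/-- The scaffold solution: the `K = 8n`-round schedule whose round `τ+1` swaps each
enforcement token one step along the path toward its target. -/
def scaffold (s : Fin n → Fin m) : List (List (PV m n × PV m n)) :=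
  List.ofFn fun τ : Fin (8 * n) =>
    (List.ofFn fun t : Fin n =>
      List.ofFn fun r : Fin 4 =>
        (posE (xB s t r) (yB s t r) (dOf t r) τ.val,
          posE (xB s t r) (yB s t r) (dOf t r) (τ.val + 1))).flatten

/-- Target placement of all tokens: item token `o` goes to the root if `π o = 0` and
to `s^{a(π o, n)}₁` otherwise; enforcement token `e_d` goes to `y^d_{K-d}`; each
filler token goes to the final vertex of its initial vertex under the scaffold
solution. -/
def tgtP (s : Fin n → Fin m) (π : Equiv.Perm (Option (Fin m))) : PTok s → PV m n
  | Sum.inl o =>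
      (match π o with
        | none => none
        | some i => some (Sum.inr (Sum.inl (aFun s n i)), 0))
  | Sum.inr (Sum.inl (t, r)) => some (yB s t r, 8 * n - dOf t r - 1)
  | Sum.inr (Sum.inr v) => applySched (scaffold s) v.val

/-- `sched` is a solution of the parallel token swapping instance using at most `K`
rounds: at most `K` rounds, every round is a matching of edges of the graph, and the
schedule brings every token from its initial vertex to its target vertex. -/
def IsSolution (s : Fin n → Fin m) (π : Equiv.Perm (Option (Fin m)))
    (K : ℕ) (sched : List (List (PV m n × PV m n))) : Prop :=
  sched.length ≤ K ∧
  (∀ R ∈ sched, (∀ e ∈ R, (PGraph m n).Adj e.1 e.2) ∧ R.Pairwise NoShare) ∧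
  ∀ t : PTok s, applySched sched (initP s t) = tgtP s π t

end ParallelTS

/-!
Every round of the scaffold solution is a matching. At time `T` the enforcement tokens sit
at pairwise distinct vertices: `e_d` is determined by `d`, and a vertex shared by an
outgoing token `e_d` and an incoming token `e_{d'}` would force `x^d = y^{d'}` with
`d' < d`, which the choice of branches excludes. Moreover the distance of every enforcement
token from the root has the parity of `T + 1`, so no vertex is an endpoint of two swaps of
one round. Hence any other token stays put unless an enforcement token enters its vertex,
and then it moves to the vertex that token came from.

Following the item tokens through the epoch of rounds `8t - 7, …, 8t` is then a finite
check: the token at the root travels `r → w^t_1 → w^t_2 → w^t_1 → r`, the item in slot `s_t`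
travels via `r`, `w^t_1` and `r` to `s^{m+t}_1`, and every other item is never touched. So after each epoch the item tokens occupy `r` and the vertices `s^{a(i,t)}_1`.
-/

namespace ParallelTS

section SwapFold

variable {V : Type*} [DecidableEq V]

theorem swapV_snd (e : V × V) : swapV e e.2 = e.1 := by
  unfold swapV
  split_ifs <;> simp_all

theorem swapV_of_ne {e : V × V} {v : V} (h₁ : v ≠ e.1) (h₂ : v ≠ e.2) : swapV e v = v := by
  simp [swapV, h₁, h₂]

theorem foldl_swapV_of_forall_ne {L : List (V × V)} {v : V}
    (h : ∀ e ∈ L, v ≠ e.1 ∧ v ≠ e.2) : L.foldl (fun v e => swapV e v) v = v := by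
  induction L with
  | nil => rfl
  | cons f L ih =>
    obtain ⟨hf, hL⟩ := List.forall_mem_cons.1 h
    rw [List.foldl_cons, swapV_of_ne hf.1 hf.2, ih hL]

theorem foldl_swapV_snd {L : List (V × V)} (hL : L.Pairwise NoShare) {e : V × V} (he : e ∈ L) :
    L.foldl (fun v e => swapV e v) e.2 = e.1 := by
  induction L with
  | nil => cases he
  | cons f L ih =>
    obtain ⟨hf, hL⟩ := List.pairwise_cons.1 hL
    rw [List.foldl_cons]
    rcases List.mem_cons.1 he with rfl | he
    · rw [swapV_snd]
      exact foldl_swapV_of_forall_ne fun g hg => ⟨(hf g hg).1, (hf g hg).2.1⟩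
    · obtain ⟨-, h₁, -, h₂⟩ := hf e he
      rw [swapV_of_ne (Ne.symm h₁) (Ne.symm h₂), ih hL he]

end SwapFold

variable {m n : ℕ}

theorem posE_eq_none_iff {xb yb : Branch m n} {d T : ℕ} : posE xb yb d T = none ↔ T = d := by
  unfold posE
  split_ifs <;> simp only [false_iff, true_iff] <;> omega

theorem posE_eq_some_iff {xb yb b : Branch m n} {d T j : ℕ} :
    posE xb yb d T = some (b, j) ↔ (T + j + 1 = d ∧ xb = b) ∨ (T = d + j + 1 ∧ yb = b) := by
  unfold posE
  split_ifs <;> grind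

theorem posE_ne_posE_succ {xb yb xb' yb' : Branch m n} {d d' T : ℕ} (hd : Odd d)
    (hd' : Odd d') : posE xb yb d T ≠ posE xb' yb' d' (T + 1) := by
  obtain ⟨a, rfl⟩ := hd
  obtain ⟨b, rfl⟩ := hd'
  unfold posE
  split_ifs <;>
    simp only [ne_eq, Option.some.injEq, Prod.mk.injEq, reduceCtorEq, not_false_eq_true,
      not_and] <;>
    omega

theorem aFun_lt (s : Fin n → Fin m) (t : ℕ) (i : Fin m) : (aFun s t i).val < m + t := by
  induction t with
  | zero => simp [aFun]
  | succ t ih =>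
    simp only [aFun]
    split_ifs
    · exact Nat.add_lt_add_left (Nat.lt_succ_self t) m
    all_goals omega

theorem aFun_injective (s : Fin n → Fin m) (t : ℕ) : Function.Injective (aFun s t) := by
  induction t with
  | zero => intro i j h; simpa [aFun, Fin.ext_iff] using h
  | succ t ih =>
    intro i j h
    have hi := aFun_lt s t i
    have hj := aFun_lt s t j
    simp only [aFun] at h
    split_ifs at h with _ h₁ h₂ h₂ <;> simp only [Fin.ext_iff] at h
    · exact h₁.symm.trans h₂
    all_goals first | omega | exact ih (Fin.ext h)

theorem aFun_succ_self (s : Fin n → Fin m) (t : Fin n) :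
    aFun s (t.val + 1) (s t) = ⟨m + t, Nat.add_lt_add_left t.isLt m⟩ := by
  simp [aFun]

theorem aFun_succ_of_ne (s : Fin n → Fin m) {t : Fin n} {i : Fin m} (h : s t ≠ i) :
    aFun s (t.val + 1) i = aFun s t i := by
  simp [aFun, h]

theorem dOf_odd (t : Fin n) (r : Fin 4) : Odd (dOf t r) := ⟨4 * t + r, by unfold dOf; ring⟩

theorem dOf_injective {t t' : Fin n} {r r' : Fin 4} (h : dOf t r = dOf t' r') :
    t = t' ∧ r = r' := by
  unfold dOf at h
  omega

theorem xB_ne_yB (s : Fin n → Fin m) {t t' : Fin n} {r r' : Fin 4} (h : dOf t' r' < dOf t r) :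
    xB s t r ≠ yB s t' r' := by
  have := aFun_lt s t' (s t')
  unfold dOf at h
  unfold xB yB
  split_ifs <;>
    simp only [ne_eq, reduceCtorEq, not_false_eq_true, Sum.inl.injEq, Sum.inr.injEq,
      Bool.true_eq_false, Fin.ext_iff] <;>
    omega

def enfPos (s : Fin n → Fin m) (t : Fin n) (r : Fin 4) (T : ℕ) : PV m n :=
  posE (xB s t r) (yB s t r) (dOf t r) T

theorem enfPos_injective (s : Fin n → Fin m) {t t' : Fin n} {r r' : Fin 4} {T : ℕ}
    (h : enfPos s t r T = enfPos s t' r' T) : t = t' ∧ r = r' := by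
  unfold enfPos at h
  rcases hv : posE (xB s t r) (yB s t r) (dOf t r) T with _ | ⟨b, j⟩
  · rw [hv, eq_comm, posE_eq_none_iff] at h
    rw [posE_eq_none_iff] at hv
    exact dOf_injective (hv ▸ h)
  · rw [hv, eq_comm, posE_eq_some_iff] at h
    rw [posE_eq_some_iff] at hv
    rcases hv with ⟨hT, hb⟩ | ⟨hT, hb⟩ <;> rcases h with ⟨hT', hb'⟩ | ⟨hT', hb'⟩
    · exact dOf_injective (by omega)
    · exact absurd (hb.trans hb'.symm) (xB_ne_yB s (by omega))
    · exact absurd (hb'.trans hb.symm) (xB_ne_yB s (by omega))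
    · exact dOf_injective (by omega)

theorem enfPos_eq_swapBranch_iff {s : Fin n → Fin m} {t t' : Fin n} {r : Fin 4} {T j : ℕ} :
    enfPos s t r T = some (Sum.inl t', j) ↔
      t = t' ∧ (r.val ≤ 1 ∧ T + j + 1 = dOf t r ∨ 2 ≤ r.val ∧ T = dOf t r + j + 1) := by
  rw [enfPos, posE_eq_some_iff]
  unfold xB yB
  split_ifs <;>
    simp only [Sum.inl.injEq, and_false, or_false, false_or, or_self, false_iff,
      not_and, not_or] <;>
    omega

theorem enfPos_eq_slot_iff {s : Fin n → Fin m} {t : Fin n} {r : Fin 4} {T : ℕ}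
    {c : Fin (m + n)} :
    enfPos s t r T = some (Sum.inr (Sum.inl c), 0) ↔
      (r.val = 3 ∧ T + 1 = dOf t r ∧ m + t = c.val) ∨
        (r.val = 0 ∧ T = dOf t r + 1 ∧ aFun s t (s t) = c) := by
  rw [enfPos, posE_eq_some_iff]
  fin_cases r <;> simp [xB, yB, Fin.ext_iff]

theorem eq_of_enfPos_eq_slot_aFun {s : Fin n → Fin m} {t t' : Fin n} {r : Fin 4} {i : Fin m}
    {T : ℕ} (hT₁ : 8 * t ≤ T) (hT₂ : T ≤ 8 * t + 8)
    (h : enfPos s t' r T = some (Sum.inr (Sum.inl (aFun s t i)), 0)) :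
    s t = i ∧ T = 8 * t + 2 := by
  have := aFun_lt s t i
  rw [enfPos_eq_slot_iff, dOf] at h
  rcases h with ⟨hr, hT, hc⟩ | ⟨hr, hT, hc⟩
  · omega
  · obtain rfl : t = t' := by omega
    exact ⟨aFun_injective s t hc, by omega⟩

def scaffoldRound (s : Fin n → Fin m) (τ : ℕ) : List (PV m n × PV m n) :=
  (List.ofFn fun t : Fin n => List.ofFn fun r : Fin 4 =>
    (enfPos s t r τ, enfPos s t r (τ + 1))).flatten

theorem mem_scaffoldRound {s : Fin n → Fin m} {τ : ℕ} {e : PV m n × PV m n} :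
    e ∈ scaffoldRound s τ ↔ ∃ t r, (enfPos s t r τ, enfPos s t r (τ + 1)) = e := by
  simp only [scaffoldRound, List.mem_flatten, List.mem_ofFn, exists_exists_eq_and]

theorem noShare_enfPos (s : Fin n → Fin m) {t t' : Fin n} {r r' : Fin 4}
    (h : ¬(t = t' ∧ r = r')) (τ : ℕ) :
    NoShare (enfPos s t r τ, enfPos s t r (τ + 1)) (enfPos s t' r' τ, enfPos s t' r' (τ + 1)) :=
  ⟨fun h' => h (enfPos_injective s h'), posE_ne_posE_succ (dOf_odd t r) (dOf_odd t' r'),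
    fun h' => posE_ne_posE_succ (dOf_odd t' r') (dOf_odd t r) h'.symm,
    fun h' => h (enfPos_injective s h')⟩

theorem scaffoldRound_pairwise_noShare (s : Fin n → Fin m) (τ : ℕ) :
    (scaffoldRound s τ).Pairwise NoShare := by
  simp only [scaffoldRound, List.pairwise_flatten, List.pairwise_ofFn,
    List.forall_mem_ofFn_iff]
  exact ⟨fun t r r' hr => noShare_enfPos s (fun h => hr.ne h.2) τ,
    fun t t' ht r r' => noShare_enfPos s (fun h => ht.ne h.1) τ⟩

def scaffoldRun (s : Fin n → Fin m) (T : ℕ) (v : PV m n) : PV m n :=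
  applySched (List.ofFn fun τ : Fin T => scaffoldRound s τ) v

theorem applySched_scaffold (s : Fin n → Fin m) (v : PV m n) :
    applySched (scaffold s) v = scaffoldRun s (8 * n) v := rfl

theorem scaffoldRun_succ (s : Fin n → Fin m) (T : ℕ) (v : PV m n) :
    scaffoldRun s (T + 1) v =
      (scaffoldRound s T).foldl (fun v e => swapV e v) (scaffoldRun s T v) := by
  simp only [scaffoldRun, applySched, List.ofFn_succ', List.concat_eq_append, List.foldl_append,
    List.foldl_cons, List.foldl_nil, Fin.val_castSucc, Fin.val_last]

theorem scaffoldRun_succ_of_enter {s : Fin n → Fin m} {T : ℕ} {v₀ v u : PV m n} (t : Fin n)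
    (r : Fin 4) (h : scaffoldRun s T v₀ = v) (hv : enfPos s t r (T + 1) = v)
    (hu : enfPos s t r T = u) : scaffoldRun s (T + 1) v₀ = u := by
  rw [scaffoldRun_succ, h, ← hv, ← hu]
  exact foldl_swapV_snd (scaffoldRound_pairwise_noShare s T) (e := (_, _))
    (mem_scaffoldRound.2 ⟨t, r, rfl⟩)

theorem scaffoldRun_eq_of_untouched {s : Fin n → Fin m} {a b : ℕ} {v₀ v : PV m n}
    (h : scaffoldRun s a v₀ = v) (hab : a ≤ b)
    (hv : ∀ t r T, a ≤ T → T ≤ b → enfPos s t r T ≠ v) : scaffoldRun s b v₀ = v := by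
  induction b, hab using Nat.le_induction with
  | base => exact h
  | succ b hab ih =>
    rw [scaffoldRun_succ, ih fun t r T h₁ h₂ => hv t r T h₁ (by omega)]
    refine foldl_swapV_of_forall_ne fun e he => ?_
    obtain ⟨t, r, rfl⟩ := mem_scaffoldRound.1 he
    exact ⟨(hv t r b hab (by omega)).symm, (hv t r (b + 1) (by omega) le_rfl).symm⟩

theorem scaffoldRun_root_epoch {s : Fin n → Fin m} (t : Fin n) {v₀ : PV m n}
    (h : scaffoldRun s (8 * t) v₀ = none) : scaffoldRun s (8 * t + 8) v₀ = none := by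
  have h₁ : scaffoldRun s (8 * t + 1) v₀ = some (Sum.inl t, 0) :=
    scaffoldRun_succ_of_enter t 0 h (by simp [enfPos, posE, dOf])
      (by simp [enfPos, posE, dOf, xB])
  have h₂ : scaffoldRun s (8 * t + 2) v₀ = some (Sum.inl t, 1) :=
    scaffoldRun_succ_of_enter t 1 h₁ (by simp [enfPos, posE, dOf, xB])
      (by simp [enfPos, posE, dOf, xB])
  have h₆ : scaffoldRun s (8 * t + 6) v₀ = some (Sum.inl t, 1) :=
    scaffoldRun_eq_of_untouched h₂ (by omega) fun t' r' T h₁ h₂ h => by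
      rw [enfPos_eq_swapBranch_iff, dOf] at h
      omega
  have h₇ : scaffoldRun s (8 * t + 7) v₀ = some (Sum.inl t, 0) :=
    scaffoldRun_succ_of_enter t 2 h₆ (by simp [enfPos, posE, dOf, yB])
      (by simp [enfPos, posE, dOf, yB])
  exact scaffoldRun_succ_of_enter t 3 h₇ (by simp [enfPos, posE, dOf, yB])
    (by simp [enfPos, posE, dOf])

theorem scaffoldRun_active_epoch {s : Fin n → Fin m} (t : Fin n) {v₀ : PV m n}
    (h : scaffoldRun s (8 * t) v₀ = some (Sum.inr (Sum.inl (aFun s t (s t))), 0)) :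
    scaffoldRun s (8 * t + 8) v₀ = some (Sum.inr (Sum.inl (aFun s (t + 1) (s t))), 0) := by
  have h₁ : scaffoldRun s (8 * t + 1) v₀ = some (Sum.inr (Sum.inl (aFun s t (s t))), 0) :=
    scaffoldRun_eq_of_untouched h (by omega) fun t' r T h₁ h₂ h => by
      have := (eq_of_enfPos_eq_slot_aFun h₁ (by omega) h).2
      omega
  have h₂ : scaffoldRun s (8 * t + 2) v₀ = none :=
    scaffoldRun_succ_of_enter t 0 h₁ (by simp [enfPos, posE, dOf, yB])
      (by simp [enfPos, posE, dOf])
  have h₃ : scaffoldRun s (8 * t + 3) v₀ = some (Sum.inl t, 0) :=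
    scaffoldRun_succ_of_enter t 1 h₂ (by simp [enfPos, posE, dOf])
      (by simp [enfPos, posE, dOf, xB])
  have h₅ : scaffoldRun s (8 * t + 5) v₀ = some (Sum.inl t, 0) :=
    scaffoldRun_eq_of_untouched h₃ (by omega) fun t' r' T h₁ h₂ h => by
      rw [enfPos_eq_swapBranch_iff, dOf] at h
      omega
  have h₆ : scaffoldRun s (8 * t + 6) v₀ = none :=
    scaffoldRun_succ_of_enter t 2 h₅ (by simp [enfPos, posE, dOf, yB])
      (by simp [enfPos, posE, dOf])
  have h₇ : scaffoldRun s (8 * t + 7) v₀ = some (Sum.inr (Sum.inl (aFun s (t + 1) (s t))), 0) :=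
    scaffoldRun_succ_of_enter t 3 h₆ (by simp [enfPos, posE, dOf])
      (by simp [enfPos, posE, dOf, xB, aFun_succ_self])
  refine scaffoldRun_eq_of_untouched h₇ (by omega) fun t' r T h₁ h₂ h => ?_
  have := aFun_lt s t' (s t')
  rw [enfPos_eq_slot_iff, dOf, aFun_succ_self] at h
  rcases h with ⟨hr, hT, hc⟩ | ⟨hr, hT, hc⟩ <;> simp only [Fin.ext_iff] at hc <;> omega

theorem scaffoldRun_inactive_epoch {s : Fin n → Fin m} (t : Fin n) {i : Fin m} (hi : s t ≠ i)
    {v₀ : PV m n} (h : scaffoldRun s (8 * t) v₀ = some (Sum.inr (Sum.inl (aFun s t i)), 0)) :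
    scaffoldRun s (8 * t + 8) v₀ = some (Sum.inr (Sum.inl (aFun s (t + 1) i)), 0) := by
  rw [aFun_succ_of_ne s hi]
  exact scaffoldRun_eq_of_untouched h (by omega) fun t' r T h₁ h₂ h =>
    hi (eq_of_enfPos_eq_slot_aFun h₁ h₂ h).1

/-- Position of the item token `o` after `8 t` rounds of the scaffold solution. -/
def itemAt (s : Fin n → Fin m) (t : ℕ) : Option (Fin m) → PV m n
  | none => none
  | some i => some (Sum.inr (Sum.inl (aFun s t i)), 0)

theorem scaffoldRun_itemAt_epoch {s : Fin n → Fin m} (t : Fin n) (o : Option (Fin m))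
    {v₀ : PV m n} (h : scaffoldRun s (8 * t) v₀ = itemAt s t o) :
    scaffoldRun s (8 * t + 8) v₀ = itemAt s (t + 1) o := by
  rcases o with _ | i
  · exact scaffoldRun_root_epoch t h
  · by_cases hi : s t = i
    · subst hi
      exact scaffoldRun_active_epoch t h
    · exact scaffoldRun_inactive_epoch t hi h

theorem scaffoldRun_itemInit (s : Fin n → Fin m) (o : Option (Fin m)) {t : ℕ} (ht : t ≤ n) :
    scaffoldRun s (8 * t) (itemInit s o) = itemAt s t o := by
  induction t with
  | zero => cases o <;> rfl
  | succ t ih => exact scaffoldRun_itemAt_epoch ⟨t, ht⟩ o (ih (by omega))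

theorem applySched_scaffold_itemInit (s : Fin n → Fin m) (o : Option (Fin m)) :
    applySched (scaffold s) (itemInit s o) = itemAt s n o :=
  (applySched_scaffold s _).trans (scaffoldRun_itemInit s o le_rfl)

theorem scaffold_item_tokens_final_positions {m n : ℕ} (s : Fin n → Fin m) :
    Set.range (fun o : Option (Fin m) => applySched (scaffold s) (itemInit s o)) =
      insert (none : PV m n)
        (Set.range fun i : Fin m => some (Sum.inr (Sum.inl (aFun s n i)), 0)) := by
  simp only [applySched_scaffold_itemInit]
  exact Option.range_eq _

end ParallelTS
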